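/- Let G be a finite directed graph, let r be the number of vertices of G having in-degree zero, and suppose G admits a path-and-cycle cover with exactly p paths (counting single vertices as paths) together with any number of cycles. Then G admits a necklace cover with exactly r open necklaces and at most p − r pendant leaves. -/

import Mathlib

open scoped Classical

variable {V : Type*} [DecidableEq V]

/-- In-degree of `v` in the digraph with edge set `E`. -/
def indeg (E : Finset (V × V)) (v : V) : ℕ := (E.filter (fun e => e.2 = v)).card

/-- Out-degree of `v` in the digraph with edge set `E`. -/
def outdeg (E : Finset (V × V)) (v : V) : ℕ := (E.filter (fun e => e.1 = v)).card

/-- `l` is a simple directed path (possibly a single vertex) in the digraph `E`. -/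
def IsDiPath (E : Finset (V × V)) (l : List V) : Prop :=
  l ≠ [] ∧ l.Nodup ∧ l.Chain' (fun u v => (u, v) ∈ E)

/-- `l` is a simple directed cycle in the digraph `E`. -/
def IsDiCycle (E : Finset (V × V)) (l : List V) : Prop :=
  ∃ h : l ≠ [], l.Nodup ∧ l.Chain' (fun u v => (u, v) ∈ E) ∧
    (l.getLast h, l.head h) ∈ E

/-- A path-and-cycle cover (PC cover) of the digraph `E`. -/
structure PCCover (E : Finset (V × V)) where
  paths : Finset (List V)
  cycles : Finset (List V)
  paths_are : ∀ l ∈ paths, IsDiPath E l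
  cycles_are : ∀ l ∈ cycles, IsDiCycle E l
  disj : Disjoint paths cycles
  pairwiseDisj : ∀ l₁ ∈ paths ∪ cycles, ∀ l₂ ∈ paths ∪ cycles, l₁ ≠ l₂ → ∀ v ∈ l₁, v ∉ l₂
  covers : ∀ v : V, ∃ l ∈ paths ∪ cycles, v ∈ l

/-- Edge set of the split bipartite graph of the digraph `E`, on vertex set `V ⊕ V`
(`Sum.inl` is the left copy `f_L`, `Sum.inr` the right copy `f_R`). -/
def splitEdges (E : Finset (V × V)) : Finset ((V ⊕ V) × (V ⊕ V)) :=
  E.image (fun e => (Sum.inl e.1, Sum.inr e.2))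

/-- A set of edges is a matching if no two of its edges share an endpoint. -/
def IsMatching {W : Type*} (M : Finset (W × W)) : Prop :=
  ∀ e₁ ∈ M, ∀ e₂ ∈ M, e₁ ≠ e₂ →
    e₁.1 ≠ e₂.1 ∧ e₁.1 ≠ e₂.2 ∧ e₁.2 ≠ e₂.1 ∧ e₁.2 ≠ e₂.2

/-- The set `F ⊆ E` of edges of `G` pulled back from a matching of the split bipartite graph. -/
def pullback (E : Finset (V × V)) (M : Finset ((V ⊕ V) × (V ⊕ V))) : Finset (V × V) :=
  E.filter (fun e => (Sum.inl e.1, Sum.inr e.2) ∈ M)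

/-- Weak reachability (reachability after forgetting edge directions) in the digraph `F`. -/
def WReach (F : Finset (V × V)) (a b : V) : Prop :=
  Relation.ReflTransGen (fun x y => (x, y) ∈ F ∨ (y, x) ∈ F) a b

/-- `H = (verts, edges)` is a necklace of the digraph `E`: a weakly connected subgraph of `E`
in which every vertex has in-degree at most one. -/
def IsNecklace (E : Finset (V × V)) (H : Finset V × Finset (V × V)) : Prop :=
  H.1.Nonempty ∧ H.2 ⊆ E ∧ (∀ e ∈ H.2, e.1 ∈ H.1 ∧ e.2 ∈ H.1) ∧
  (∀ a ∈ H.1, ∀ b ∈ H.1,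
    Relation.ReflTransGen (fun x y => (x, y) ∈ H.2 ∨ (y, x) ∈ H.2) a b) ∧
  (∀ v ∈ H.1, indeg H.2 v ≤ 1)

/-- A necklace is closed if it contains a directed cycle (and open otherwise). -/
def IsClosedNecklace (H : Finset V × Finset (V × V)) : Prop :=
  ∃ l : List V, IsDiCycle H.2 l

/-- `C` is a necklace cover of the digraph `E`: a collection of necklaces with pairwise
disjoint vertex sets covering every vertex. -/
def IsNecklaceCover (E : Finset (V × V)) (C : Finset (Finset V × Finset (V × V))) : Prop :=
  (∀ H ∈ C, IsNecklace E H) ∧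
  (∀ H₁ ∈ C, ∀ H₂ ∈ C, H₁ ≠ H₂ → Disjoint H₁.1 H₂.1) ∧
  (∀ v : V, ∃ H ∈ C, v ∈ H.1)

/-- `N_O`: the number of open necklaces of the cover `C`. -/
noncomputable def numOpen (C : Finset (Finset V × Finset (V × V))) : ℕ :=
  (C.filter (fun H => ¬ IsClosedNecklace H)).card

/-- Total number of vertices of out-degree zero within their necklace, over the cover `C`. -/
def numSinks (C : Finset (Finset V × Finset (V × V))) : ℕ :=
  ∑ H ∈ C, (H.1.filter (fun v => outdeg H.2 v = 0)).card

/-- `N_L`: the number of pendant leaves of the cover `C` (total number of out-degree-zero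
vertices within their necklace, minus the number of open necklaces). -/
noncomputable def numLeaves (C : Finset (Finset V × Finset (V × V))) : ℕ :=
  numSinks C - numOpen C

/-!
Each path of the PC cover becomes an open necklace with a single sink and each cycle a closed
necklace without sinks, so the resulting necklace cover has at most `p` sinks. Every necklace
stays either ranked with a unique root (hence open) or saturated, i.e. every vertex has an
in-edge (hence closed), so a source of `G` is the root of its necklace and `N_O ≥ r`. While
`N_O > r`, some open necklace has a root `h` with an in-edge `(u, h)` of `G`; grafting it along
that edge onto the necklace of `u` (closing it up if `u` lies in it) lowers `N_O` by one and
creates no sink. At the end `N_O = r` and `N_L ≤ p - r`.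
-/

section Degrees

variable {F F' : Finset (V × V)} {v : V}

lemma indeg_eq_zero_iff : indeg F v = 0 ↔ ∀ w, (w, v) ∉ F := by
  simp only [indeg, Finset.card_eq_zero, Finset.filter_eq_empty_iff, Prod.forall]
  exact ⟨fun h w hw => h w v hw rfl, fun h a b hab hb => h a (hb ▸ hab)⟩

lemma outdeg_eq_zero_iff : outdeg F v = 0 ↔ ∀ w, (v, w) ∉ F := by
  simp only [outdeg, Finset.card_eq_zero, Finset.filter_eq_empty_iff, Prod.forall]
  exact ⟨fun h w hw => h v w hw rfl, fun h a b hab ha => h b (ha ▸ hab)⟩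

lemma indeg_le_one_iff : indeg F v ≤ 1 ↔ ∀ a b, (a, v) ∈ F → (b, v) ∈ F → a = b := by
  simp only [indeg, Finset.card_le_one, Finset.mem_filter, Prod.forall, Prod.mk.injEq]
  constructor
  · intro h a b ha hb
    exact (h a v ⟨ha, rfl⟩ b v ⟨hb, rfl⟩).1
  · rintro h a _ ⟨ha, rfl⟩ b _ ⟨hb, rfl⟩
    exact ⟨h a b ha hb, rfl⟩

lemma indeg_insert_le_one {u h : V} (hv : indeg F v ≤ 1)
    (hh : ∀ w, (w, h) ∉ F) : indeg (insert (u, h) F) v ≤ 1 := by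
  rw [indeg_le_one_iff] at hv ⊢
  intro a b ha hb
  rcases Finset.mem_insert.mp ha with ha | ha <;> rcases Finset.mem_insert.mp hb with hb | hb
  · simp_all
  · simp only [Prod.mk.injEq] at ha
    exact absurd (ha.2 ▸ hb) (hh b)
  · simp only [Prod.mk.injEq] at hb
    exact absurd (hb.2 ▸ ha) (hh a)
  · exact hv a b ha hb

omit [DecidableEq V] in
lemma WReach.mono (h : F ⊆ F') {a b : V} (hab : WReach F a b) : WReach F' a b :=
  Relation.ReflTransGen.mono (fun _ _ => Or.imp (@h _) (@h _)) a b hab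

omit [DecidableEq V] in
lemma WReach.symm {a b : V} (hab : WReach F a b) : WReach F b a :=
  haveI : Std.Symm (fun x y : V => (x, y) ∈ F ∨ (y, x) ∈ F) := ⟨fun _ _ => Or.symm⟩
  Std.Symm.symm (r := Relation.ReflTransGen _) _ _ hab

omit [DecidableEq V] in
lemma WReach.of_mem {a b : V} (h : (a, b) ∈ F) : WReach F a b :=
  Relation.ReflTransGen.single (Or.inl h)

end Degrees

def IsRanked (F : Finset (V × V)) : Prop :=
  ∃ f : V → ℕ, ∀ e ∈ F, f e.1 < f e.2

omit [DecidableEq V] in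
lemma IsRanked.not_isDiCycle {F : Finset (V × V)} (hF : IsRanked F) (l : List V) :
    ¬ IsDiCycle F l := by
  obtain ⟨f, hf⟩ := hF
  rintro ⟨hl, -, hchain, hclose⟩
  obtain ⟨a, t, rfl⟩ := List.exists_cons_of_ne_nil hl
  have hpair : (a :: t).Pairwise (fun x y => f x < f y) :=
    List.isChain_iff_pairwise.mp (hchain.imp fun x y hxy => hf (x, y) hxy)
  have hle : f a ≤ f ((a :: t).getLast hl) := by
    rcases List.mem_cons.mp (List.getLast_mem hl) with h | h
    · rw [h]
    · exact (List.rel_of_pairwise_cons hpair h).le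
  have := hf _ hclose
  simp only [List.head_cons] at this
  omega

omit [DecidableEq V] in
/-- The part of a simple path up to a vertex `w` with an edge back to its start is a cycle. -/
lemma List.IsChain.exists_isDiCycle {F : Finset (V × V)} {a w : V} {t : List V}
    (hchain : (a :: t).IsChain (fun x y => (x, y) ∈ F)) (hnd : (a :: t).Nodup)
    (hw : w ∈ a :: t) (hwa : (w, a) ∈ F) : ∃ l, IsDiCycle F l := by
  obtain ⟨s, s', hsplit⟩ := List.append_of_mem hw
  have hpre : (s ++ [w]) ++ s' = a :: t := by simpa using hsplit.symm
  have hhead : (s ++ [w]).head (by simp) = a := by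
    rw [← List.head_append_of_ne_nil (l' := s') (w₁ := by simp) (by simp)]
    simp only [hpre, List.head_cons]
  refine ⟨s ++ [w], by simp, (List.sublist_append_left _ _).nodup (hpre ▸ hnd),
    (hpre ▸ hchain : List.IsChain _ ((s ++ [w]) ++ s')).left_of_append, ?_⟩
  rw [hhead, List.getLast_append_singleton]
  exact hwa

/-- A simple path inside `S` can be extended backwards until the new in-neighbour of its start
is already on it, and this must happen since such paths have at most `#S` vertices. -/
theorem exists_isDiCycle_of_forall_exists_mem {F : Finset (V × V)} {S : Finset V}
    (hS : S.Nonempty) (hin : ∀ v ∈ S, ∃ w ∈ S, (w, v) ∈ F) : ∃ l, IsDiCycle F l := by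
  by_contra hno
  have grow : ∀ n : ℕ, ∃ l : List V, l ≠ [] ∧ l.Nodup ∧
      l.IsChain (fun x y => (x, y) ∈ F) ∧ (∀ x ∈ l, x ∈ S) ∧ n ≤ l.length := by
    intro n
    induction n with
    | zero =>
      obtain ⟨v, hv⟩ := hS
      exact ⟨[v], by simp, by simp, List.isChain_singleton v, by simpa using hv, by simp⟩
    | succ n ih =>
      obtain ⟨l, hl, hnd, hchain, hS', hlen⟩ := ih
      obtain ⟨a, t, rfl⟩ := List.exists_cons_of_ne_nil hl
      obtain ⟨w, hwS, hwa⟩ := hin a (hS' a (by simp))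
      by_cases hw : w ∈ a :: t
      · exact absurd (hchain.exists_isDiCycle hnd hw hwa) hno
      · exact ⟨w :: a :: t, by simp, List.nodup_cons.mpr ⟨hw, hnd⟩,
          List.isChain_cons_cons.mpr ⟨hwa, hchain⟩, by simpa [hwS] using hS',
          by simpa using hlen⟩
  obtain ⟨l, -, hnd, -, hS', hlen⟩ := grow (S.card + 1)
  have : l.length ≤ S.card := by
    rw [← List.toFinset_card_of_nodup hnd]
    exact Finset.card_le_card fun x hx => hS' x (List.mem_toFinset.mp hx)
  omega

def IsRootedAt (H : Finset V × Finset (V × V)) (ρ : V) : Prop :=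
  ρ ∈ H.1 ∧ (∀ w, (w, ρ) ∉ H.2) ∧ ∀ v ∈ H.1, v ≠ ρ → ∃ w, (w, v) ∈ H.2

def IsSaturated (H : Finset V × Finset (V × V)) : Prop :=
  ∀ v ∈ H.1, ∃ w, (w, v) ∈ H.2

def sinks (H : Finset V × Finset (V × V)) : Finset V :=
  H.1.filter (fun v => outdeg H.2 v = 0)

section Necklaces

variable {E : Finset (V × V)} {H H' : Finset V × Finset (V × V)}

lemma IsRootedAt.unique {ρ ρ' : V} (hρ : IsRootedAt H ρ) (hρ' : IsRootedAt H ρ') :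
    ρ = ρ' := by
  by_contra hne
  obtain ⟨w, hw⟩ := hρ'.2.2 ρ hρ.1 hne
  exact hρ.2.1 w hw

omit [DecidableEq V] in
lemma IsRanked.not_isClosedNecklace (hR : IsRanked H.2) : ¬ IsClosedNecklace H :=
  fun ⟨l, hl⟩ => hR.not_isDiCycle l hl

lemma IsSaturated.isClosedNecklace (hH : IsNecklace E H) (hsat : IsSaturated H) :
    IsClosedNecklace H :=
  exists_isDiCycle_of_forall_exists_mem hH.1 fun v hv =>
    let ⟨w, hw⟩ := hsat v hv
    ⟨w, (hH.2.2.1 _ hw).1, hw⟩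

lemma isNecklace_singleton {a : V} : IsNecklace E ({a}, ∅) := by
  refine ⟨Finset.singleton_nonempty a, Finset.empty_subset E, by simp, ?_, by simp [indeg]⟩
  intro x hx y hy
  rw [Finset.mem_singleton.mp hx, Finset.mem_singleton.mp hy]

omit [DecidableEq V] in
lemma isRootedAt_singleton (a : V) : IsRootedAt ({a}, ∅) a :=
  ⟨Finset.mem_singleton_self a, by simp,
    fun v hv hne => absurd (Finset.mem_singleton.mp hv) hne⟩

lemma IsNecklace.indeg_union_le_one (hH : IsNecklace E H) (hH' : IsNecklace E H')
    (hHH' : H' = H ∨ Disjoint H.1 H'.1) (v : V) : indeg (H.2 ∪ H'.2) v ≤ 1 := by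
  obtain ⟨-, -, hends, -, hdeg⟩ := hH
  obtain ⟨-, -, hends', -, hdeg'⟩ := hH'
  rcases hHH' with rfl | hdisj
  · rw [Finset.union_self, indeg_le_one_iff]
    intro a b ha hb
    exact indeg_le_one_iff.mp (hdeg v (hends _ ha).2) a b ha hb
  rw [indeg_le_one_iff]
  intro a b ha hb
  rcases Finset.mem_union.mp ha with ha | ha <;> rcases Finset.mem_union.mp hb with hb | hb
  · exact indeg_le_one_iff.mp (hdeg v (hends _ ha).2) a b ha hb
  · exact absurd (hends' _ hb).2 (Finset.disjoint_left.mp hdisj (hends _ ha).2)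
  · exact absurd (hends' _ ha).2 (Finset.disjoint_left.mp hdisj (hends _ hb).2)
  · exact indeg_le_one_iff.mp (hdeg' v (hends' _ ha).2) a b ha hb

end Necklaces

/-- Attach the necklace `H` by its root `h` below the vertex `u` of `H'`, through the new edge
`(u, h)`. When `H' = H` this closes `H` into a cycle. -/
def graft (H H' : Finset V × Finset (V × V)) (u h : V) : Finset V × Finset (V × V) :=
  (H.1 ∪ H'.1, insert (u, h) (H.2 ∪ H'.2))

section Graft

variable {E : Finset (V × V)} {H H' : Finset V × Finset (V × V)} {u h : V}

lemma left_subset_graft : H.2 ⊆ (graft H H' u h).2 :=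
  Finset.subset_union_left.trans (Finset.subset_insert _ _)

lemma right_subset_graft : H'.2 ⊆ (graft H H' u h).2 :=
  Finset.subset_union_right.trans (Finset.subset_insert _ _)

lemma mem_graft_edges : (u, h) ∈ (graft H H' u h).2 :=
  Finset.mem_insert_self _ _

theorem graft_isNecklace (hH : IsNecklace E H) (hH' : IsNecklace E H')
    (hHH' : H' = H ∨ Disjoint H.1 H'.1) (hroot : IsRootedAt H h) (hu : u ∈ H'.1)
    (huh : (u, h) ∈ E) : IsNecklace E (graft H H' u h) := by
  obtain ⟨hh, hh0, -⟩ := hroot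
  have hnew : ∀ w, (w, h) ∉ H.2 ∪ H'.2 := by
    intro w hw
    rcases Finset.mem_union.mp hw with hw | hw
    · exact hh0 w hw
    rcases hHH' with hHH' | hdisj
    · exact hh0 w (hHH' ▸ hw)
    · exact Finset.disjoint_left.mp hdisj hh (hH'.2.2.1 _ hw).2
  have hreach : ∀ a ∈ (graft H H' u h).1, WReach (graft H H' u h).2 a h := by
    intro a ha
    rcases Finset.mem_union.mp ha with ha | ha
    · exact WReach.mono left_subset_graft (hH.2.2.2.1 a ha h hh)
    · exact (WReach.mono right_subset_graft (hH'.2.2.2.1 a ha u hu)).trans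
        (WReach.of_mem mem_graft_edges)
  refine ⟨⟨h, Finset.mem_union_left _ hh⟩,
    Finset.insert_subset huh (Finset.union_subset hH.2.1 hH'.2.1), ?_,
    fun a ha b hb => (hreach a ha).trans (hreach b hb).symm,
    fun v _ => indeg_insert_le_one (hH.indeg_union_le_one hH' hHH' v) hnew⟩
  intro e he
  rcases Finset.mem_insert.mp he with rfl | he
  · exact ⟨Finset.mem_union_right _ hu, Finset.mem_union_left _ hh⟩
  rcases Finset.mem_union.mp he with he | he
  · exact (hH.2.2.1 e he).imp (Finset.mem_union_left _) (Finset.mem_union_left _)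
  · exact (hH'.2.2.1 e he).imp (Finset.mem_union_right _) (Finset.mem_union_right _)

theorem graft_isSaturated (hroot : IsRootedAt H h) (hH' : H' = H ∨ IsSaturated H') :
    IsSaturated (graft H H' u h) := by
  have hleft : ∀ v ∈ H.1, ∃ w, (w, v) ∈ (graft H H' u h).2 := by
    intro v hv
    by_cases hvh : v = h
    · exact ⟨u, hvh ▸ mem_graft_edges⟩
    · obtain ⟨w, hw⟩ := hroot.2.2 v hv hvh
      exact ⟨w, left_subset_graft hw⟩
  intro v hv
  rcases Finset.mem_union.mp hv with hv | hv
  · exact hleft v hv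
  rcases hH' with hH'H | hsat
  · exact hleft v (hH'H ▸ hv)
  · obtain ⟨w, hw⟩ := hsat v hv
    exact ⟨w, right_subset_graft hw⟩

theorem graft_isRootedAt {ρ : V} (hH : IsNecklace E H) (hdisj : Disjoint H.1 H'.1)
    (hroot : IsRootedAt H h) (hroot' : IsRootedAt H' ρ) :
    IsRootedAt (graft H H' u h) ρ := by
  obtain ⟨hh, -, hin⟩ := hroot
  obtain ⟨hρ, hρ0, hin'⟩ := hroot'
  refine ⟨Finset.mem_union_right _ hρ, ?_, ?_⟩
  · intro w hw
    rcases Finset.mem_insert.mp hw with hw | hw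
    · obtain ⟨-, rfl⟩ := Prod.mk.inj hw
      exact Finset.disjoint_left.mp hdisj hh hρ
    rcases Finset.mem_union.mp hw with hw | hw
    · exact Finset.disjoint_left.mp hdisj (hH.2.2.1 _ hw).2 hρ
    · exact hρ0 w hw
  · intro v hv hvρ
    rcases Finset.mem_union.mp hv with hv | hv
    · by_cases hvh : v = h
      · exact ⟨u, hvh ▸ mem_graft_edges⟩
      · obtain ⟨w, hw⟩ := hin v hv hvh
        exact ⟨w, left_subset_graft hw⟩
    · obtain ⟨w, hw⟩ := hin' v hv hvρ
      exact ⟨w, right_subset_graft hw⟩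

/-- Shifting the rank of `H` above the rank of `u` in `H'` makes the new edge `(u, h)`
increasing as well. -/
theorem graft_isRanked (hH : IsNecklace E H) (hH' : IsNecklace E H') (hdisj : Disjoint H.1 H'.1)
    (hu : u ∈ H'.1) (hh : h ∈ H.1) (hrank : IsRanked H.2) (hrank' : IsRanked H'.2) :
    IsRanked (graft H H' u h).2 := by
  obtain ⟨f, hf⟩ := hrank
  obtain ⟨f', hf'⟩ := hrank'
  have hnotH : ∀ v ∈ H'.1, v ∉ H.1 := fun v hv hvH => Finset.disjoint_left.mp hdisj hvH hv
  refine ⟨fun v => if v ∈ H.1 then f v + f' u + 1 else f' v, ?_⟩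
  intro e he
  rcases Finset.mem_insert.mp he with rfl | he
  · simp only [if_neg (hnotH u hu), if_pos hh]
    omega
  rcases Finset.mem_union.mp he with he | he
  · obtain ⟨h1, h2⟩ := hH.2.2.1 e he
    simp only [if_pos h1, if_pos h2]
    exact Nat.add_lt_add_right (Nat.add_lt_add_right (hf e he) _) _
  · obtain ⟨h1, h2⟩ := hH'.2.2.1 e he
    simp only [if_neg (hnotH _ h1), if_neg (hnotH _ h2)]
    exact hf' e he

lemma sinks_graft_subset : sinks (graft H H' u h) ⊆ (sinks H ∪ sinks H').erase u := by
  intro v hv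
  simp only [sinks, Finset.mem_filter, outdeg_eq_zero_iff] at hv
  obtain ⟨hv, hout⟩ := hv
  have hvu : v ≠ u := by
    rintro rfl
    exact hout h mem_graft_edges
  simp only [Finset.mem_erase, Finset.mem_union, sinks, Finset.mem_filter, outdeg_eq_zero_iff]
  refine ⟨hvu, (Finset.mem_union.mp hv).imp (fun hv => ⟨hv, fun w hw => hout w ?_⟩)
    (fun hv => ⟨hv, fun w hw => hout w ?_⟩)⟩
  · exact left_subset_graft hw
  · exact right_subset_graft hw

end Graft

def pathNecklace : List V → Finset V × Finset (V × V)
  | [] => (∅, ∅)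
  | [a] => ({a}, ∅)
  | a :: b :: t => graft (pathNecklace (b :: t)) ({a}, ∅) a b

lemma pathNecklace_fst : ∀ l : List V, (pathNecklace l).1 = l.toFinset
  | [] => rfl
  | [a] => by simp [pathNecklace]
  | a :: b :: t => by
    rw [List.toFinset_cons, Finset.insert_eq, Finset.union_comm, ← pathNecklace_fst (b :: t)]
    rfl

lemma sinks_pathNecklace_subset : ∀ l : List V, sinks (pathNecklace l) ⊆ l.getLast?.toFinset
  | [] => Finset.filter_subset _ _
  | [a] => Finset.filter_subset _ _
  | a :: b :: t => by
    refine sinks_graft_subset.trans fun v hv => ?_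
    obtain ⟨hva, hv⟩ := Finset.mem_erase.mp hv
    rcases Finset.mem_union.mp hv with hv | hv
    · simpa using sinks_pathNecklace_subset (b :: t) hv
    · exact absurd (Finset.mem_singleton.mp (Finset.mem_filter.mp hv).1) hva

theorem IsDiPath.isNecklace_pathNecklace {E : Finset (V × V)} {a : V} {t : List V}
    (hp : IsDiPath E (a :: t)) :
    IsNecklace E (pathNecklace (a :: t)) ∧ IsRanked (pathNecklace (a :: t)).2 ∧
      IsRootedAt (pathNecklace (a :: t)) a := by
  induction t generalizing a with
  | nil =>
    exact ⟨isNecklace_singleton, ⟨fun _ => 0, by simp [pathNecklace]⟩,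
      isRootedAt_singleton a⟩
  | cons b t ih =>
    obtain ⟨-, hnd, hchain⟩ := hp
    obtain ⟨hab, hchain⟩ := List.isChain_cons_cons.mp hchain
    obtain ⟨hN, hR, hroot⟩ := ih ⟨List.cons_ne_nil b t, hnd.of_cons, hchain⟩
    have hdisj : Disjoint (pathNecklace (b :: t)).1 ({a} : Finset V) := by
      rw [pathNecklace_fst, Finset.disjoint_singleton_right, List.mem_toFinset]
      exact (List.nodup_cons.mp hnd).1
    exact ⟨graft_isNecklace hN isNecklace_singleton (Or.inr hdisj) hroot
        (Finset.mem_singleton_self a) hab,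
      graft_isRanked hN isNecklace_singleton hdisj (Finset.mem_singleton_self a) hroot.1 hR
        ⟨fun _ => 0, by simp⟩,
      graft_isRootedAt hN hdisj hroot (isRootedAt_singleton a)⟩

def cycleNecklace : List V → Finset V × Finset (V × V)
  | [] => (∅, ∅)
  | a :: t => graft (pathNecklace (a :: t)) (pathNecklace (a :: t))
      ((a :: t).getLast (List.cons_ne_nil a t)) a

lemma cycleNecklace_fst (l : List V) : (cycleNecklace l).1 = l.toFinset := by
  cases l with
  | nil => rfl
  | cons a t => simp [cycleNecklace, graft, pathNecklace_fst]

lemma sinks_cycleNecklace (l : List V) : sinks (cycleNecklace l) = ∅ := by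
  cases l with
  | nil => rfl
  | cons a t =>
    refine Finset.subset_empty.mp (sinks_graft_subset.trans fun v hv => ?_)
    obtain ⟨hvlast, hv⟩ := Finset.mem_erase.mp hv
    rw [Finset.union_self] at hv
    have := sinks_pathNecklace_subset (a :: t) hv
    rw [List.getLast?_eq_some_getLast (List.cons_ne_nil a t), Option.mem_toFinset,
      Option.mem_some_iff] at this
    exact absurd this.symm hvlast

theorem IsDiCycle.isNecklace_cycleNecklace {E : Finset (V × V)} {l : List V} (hc : IsDiCycle E l) :
    IsNecklace E (cycleNecklace l) ∧ IsSaturated (cycleNecklace l) := by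
  obtain ⟨hl, hnd, hchain, hclose⟩ := hc
  obtain ⟨a, t, rfl⟩ := List.exists_cons_of_ne_nil hl
  obtain ⟨hN, -, hroot⟩ := IsDiPath.isNecklace_pathNecklace ⟨hl, hnd, hchain⟩
  have hlast : (a :: t).getLast hl ∈ (pathNecklace (a :: t)).1 := by
    rw [pathNecklace_fst]
    exact List.mem_toFinset.mpr (List.getLast_mem hl)
  exact ⟨graft_isNecklace hN hN (Or.inl rfl) hroot hlast hclose,
    graft_isSaturated hroot (Or.inl rfl)⟩

def IsTame (H : Finset V × Finset (V × V)) : Prop :=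
  (IsRanked H.2 ∧ ∃ ρ, IsRootedAt H ρ) ∨ IsSaturated H

def IsTameCover (E : Finset (V × V)) (D : Finset (Finset V × Finset (V × V))) : Prop :=
  IsNecklaceCover E D ∧ ∀ H ∈ D, IsTame H

namespace PCCover

variable {E : Finset (V × V)} (C : PCCover E)

def necklace (l : List V) : Finset V × Finset (V × V) :=
  if l ∈ C.cycles then cycleNecklace l else pathNecklace l

lemma necklace_fst (l : List V) : (C.necklace l).1 = l.toFinset := by
  unfold necklace
  split_ifs
  · exact cycleNecklace_fst l
  · exact pathNecklace_fst l

lemma card_sinks_necklace_le_one (l : List V) : (sinks (C.necklace l)).card ≤ 1 := by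
  unfold necklace
  split_ifs
  · simp [sinks_cycleNecklace]
  · refine (Finset.card_le_card (sinks_pathNecklace_subset l)).trans ?_
    cases l.getLast? <;> simp

lemma sinks_necklace_of_mem_cycles {l : List V} (hl : l ∈ C.cycles) :
    sinks (C.necklace l) = ∅ := by
  rw [necklace, if_pos hl, sinks_cycleNecklace]

lemma isNecklace_necklace {l : List V} (hl : l ∈ C.paths ∪ C.cycles) :
    IsNecklace E (C.necklace l) ∧ IsTame (C.necklace l) := by
  unfold necklace
  split_ifs with hcyc
  · obtain ⟨hN, hsat⟩ := (C.cycles_are l hcyc).isNecklace_cycleNecklace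
    exact ⟨hN, Or.inr hsat⟩
  · have hpath := C.paths_are l ((Finset.mem_union.mp hl).resolve_right hcyc)
    obtain ⟨a, t, rfl⟩ := List.exists_cons_of_ne_nil hpath.1
    obtain ⟨hN, hR, hroot⟩ := hpath.isNecklace_pathNecklace
    exact ⟨hN, Or.inl ⟨hR, a, hroot⟩⟩

theorem exists_isTameCover : ∃ D, IsTameCover E D ∧ numSinks D ≤ C.paths.card := by
  refine ⟨(C.paths ∪ C.cycles).image C.necklace, ⟨⟨?_, ?_, ?_⟩, ?_⟩, ?_⟩
  · simp only [Finset.forall_mem_image]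
    exact fun l hl => (C.isNecklace_necklace hl).1
  · simp only [Finset.forall_mem_image]
    intro l₁ hl₁ l₂ hl₂ hne
    rw [C.necklace_fst, C.necklace_fst, Finset.disjoint_left]
    intro v hv₁ hv₂
    exact C.pairwiseDisj l₁ hl₁ l₂ hl₂ (fun h => hne (h ▸ rfl)) v
      (List.mem_toFinset.mp hv₁) (List.mem_toFinset.mp hv₂)
  · intro v
    obtain ⟨l, hl, hv⟩ := C.covers v
    exact ⟨C.necklace l, Finset.mem_image_of_mem _ hl,
      C.necklace_fst l ▸ List.mem_toFinset.mpr hv⟩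
  · simp only [Finset.forall_mem_image]
    exact fun l hl => (C.isNecklace_necklace hl).2
  · calc numSinks ((C.paths ∪ C.cycles).image C.necklace)
        ≤ ∑ l ∈ C.paths ∪ C.cycles, (sinks (C.necklace l)).card :=
          Finset.sum_image_le_of_nonneg fun _ _ => Nat.zero_le _
      _ = ∑ l ∈ C.paths, (sinks (C.necklace l)).card := by
          rw [Finset.sum_union C.disj, Finset.sum_eq_zero (s := C.cycles) fun l hl => by
            rw [C.sinks_necklace_of_mem_cycles hl, Finset.card_empty], add_zero]
      _ ≤ ∑ _l ∈ C.paths, 1 := Finset.sum_le_sum fun l _ => C.card_sinks_necklace_le_one l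
      _ = C.paths.card := by simp

end PCCover

lemma Finset.sum_insert_le_add {α : Type*} [DecidableEq α] (a : α) (s : Finset α)
    (f : α → ℕ) :
    ∑ x ∈ insert a s, f x ≤ f a + ∑ x ∈ s, f x := by
  by_cases ha : a ∈ s
  · rw [Finset.insert_eq_of_mem ha]
    exact Nat.le_add_left _ _
  · rw [Finset.sum_insert ha]

section Covers

variable {E : Finset (V × V)} {D S : Finset (Finset V × Finset (V × V))}
  {H H' M : Finset V × Finset (V × V)}

lemma IsNecklaceCover.eq_of_mem (hD : IsNecklaceCover E D) (hH : H ∈ D) (hH' : H' ∈ D) {v : V}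
    (hv : v ∈ H.1) (hv' : v ∈ H'.1) : H = H' := by
  by_contra hne
  exact Finset.disjoint_left.mp (hD.2.1 H hH H' hH' hne) hv hv'

lemma IsNecklaceCover.insert_sdiff (hD : IsNecklaceCover E D) (hH : H ∈ D) (hH' : H' ∈ D)
    (hM : IsNecklace E M) (hM1 : M.1 = H.1 ∪ H'.1) :
    IsNecklaceCover E (insert M (D \ {H, H'})) := by
  obtain ⟨hneck, hdisj, hcov⟩ := hD
  have hrest : ∀ K ∈ D \ {H, H'}, K ∈ D ∧ K ≠ H ∧ K ≠ H' := by
    intro K hK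
    simp only [Finset.mem_sdiff, Finset.mem_insert, Finset.mem_singleton, not_or] at hK
    exact ⟨hK.1, hK.2⟩
  have hMdisj : ∀ K ∈ D \ {H, H'}, Disjoint M.1 K.1 := by
    intro K hK
    obtain ⟨hK, hKH, hKH'⟩ := hrest K hK
    rw [hM1, Finset.disjoint_union_left]
    exact ⟨hdisj H hH K hK (Ne.symm hKH), hdisj H' hH' K hK (Ne.symm hKH')⟩
  refine ⟨?_, ?_, ?_⟩
  · simp only [Finset.forall_mem_insert]
    exact ⟨hM, fun K hK => hneck K (hrest K hK).1⟩
  · intro K₁ h₁ K₂ h₂ hne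
    rcases Finset.mem_insert.mp h₁ with rfl | hK₁
    · rcases Finset.mem_insert.mp h₂ with rfl | hK₂
      · exact absurd rfl hne
      · exact hMdisj K₂ hK₂
    · rcases Finset.mem_insert.mp h₂ with rfl | hK₂
      · exact (hMdisj K₁ hK₁).symm
      · exact hdisj K₁ (hrest K₁ hK₁).1 K₂ (hrest K₂ hK₂).1 hne
  · intro v
    obtain ⟨K, hK, hvK⟩ := hcov v
    by_cases hKS : K ∈ ({H, H'} : Finset _)
    · refine ⟨M, Finset.mem_insert_self _ _, hM1 ▸ ?_⟩
      rcases Finset.mem_insert.mp hKS with rfl | hKS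
      · exact Finset.mem_union_left _ hvK
      · exact Finset.mem_union_right _ (Finset.mem_singleton.mp hKS ▸ hvK)
    · exact ⟨K, Finset.mem_insert_of_mem (Finset.mem_sdiff.mpr ⟨hK, hKS⟩), hvK⟩

omit [DecidableEq V] in
lemma numOpen_eq_sum (D : Finset (Finset V × Finset (V × V))) :
    numOpen D = ∑ K ∈ D, if IsClosedNecklace K then 0 else 1 := by
  simp only [numOpen, Finset.card_filter, ite_not]

omit [DecidableEq V] in
lemma numOpen_singleton_le_one (K : Finset V × Finset (V × V)) : numOpen {K} ≤ 1 :=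
  (Finset.card_filter_le _ _).trans (Finset.card_singleton K).le

omit [DecidableEq V] in
lemma numOpen_singleton_of_isClosedNecklace (hM : IsClosedNecklace M) : numOpen {M} = 0 := by
  simp [numOpen, hM]

omit [DecidableEq V] in
lemma one_le_numOpen_of_mem (hH : H ∈ D) (hopen : ¬ IsClosedNecklace H) : 1 ≤ numOpen D :=
  Finset.card_pos.mpr ⟨H, Finset.mem_filter.mpr ⟨hH, hopen⟩⟩

lemma numOpen_pair (hne : H ≠ H') (hopen : ¬ IsClosedNecklace H)
    (hopen' : ¬ IsClosedNecklace H') :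
    numOpen {H, H'} = 2 := by
  rw [numOpen, Finset.filter_true_of_mem (by simp [hopen, hopen']), Finset.card_pair hne]

lemma numOpen_insert_sdiff_add_le (hS : S ⊆ D) :
    numOpen (insert M (D \ S)) + numOpen S ≤ numOpen D + numOpen {M} := by
  have hsplit := Finset.sum_sdiff hS (f := fun K => if IsClosedNecklace K then 0 else 1)
  have hins := Finset.sum_insert_le_add M (D \ S) (fun K => if IsClosedNecklace K then 0 else 1)
  simp only [numOpen_eq_sum, Finset.sum_singleton] at hsplit hins ⊢
  omega

lemma numSinks_insert_sdiff_le (hS : S ⊆ D) (hM : sinks M ⊆ S.biUnion sinks) :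
    numSinks (insert M (D \ S)) ≤ numSinks D := by
  have hsplit := Finset.sum_sdiff hS (f := fun K => (sinks K).card)
  have hins := Finset.sum_insert_le_add M (D \ S) (fun K => (sinks K).card)
  have hMS : (sinks M).card ≤ ∑ K ∈ S, (sinks K).card :=
    (Finset.card_le_card hM).trans Finset.card_biUnion_le
  simp only [numSinks, sinks] at hsplit hins hMS ⊢
  omega

end Covers

def sources [Fintype V] (E : Finset (V × V)) : Finset V :=
  Finset.univ.filter (fun v => indeg E v = 0)

namespace IsTameCover

variable {E : Finset (V × V)} {D : Finset (Finset V × Finset (V × V))}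
  {H H' : Finset V × Finset (V × V)}

lemma isRanked_of_not_isClosedNecklace (hD : IsTameCover E D) (hH : H ∈ D)
    (hopen : ¬ IsClosedNecklace H) : IsRanked H.2 ∧ ∃ ρ, IsRootedAt H ρ :=
  (hD.2 H hH).resolve_right fun hsat => hopen (hsat.isClosedNecklace (hD.1.1 H hH))

lemma isRootedAt_of_indeg_eq_zero (hD : IsTameCover E D) (hH : H ∈ D) {v : V} (hv : v ∈ H.1)
    (hv0 : indeg E v = 0) : IsRanked H.2 ∧ IsRootedAt H v := by
  have hno : ∀ w, (w, v) ∉ H.2 := fun w hw => indeg_eq_zero_iff.mp hv0 w ((hD.1.1 H hH).2.1 hw)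
  rcases hD.2 H hH with ⟨hR, ρ, hρ⟩ | hsat
  · refine ⟨hR, ?_⟩
    by_cases hvρ : v = ρ
    · exact hvρ ▸ hρ
    · obtain ⟨w, hw⟩ := hρ.2.2 v hv hvρ
      exact absurd hw (hno w)
  · obtain ⟨w, hw⟩ := hsat v hv
    exact absurd hw (hno w)

/-- A source of `E` is the root of the necklace containing it, and distinct sources lie in
distinct necklaces. -/
lemma card_sources_le_numOpen [Fintype V] (hD : IsTameCover E D) :
    (sources E).card ≤ numOpen D := by
  choose φ hφD hφv using hD.1.2.2
  have hroot : ∀ v ∈ sources E, IsRanked (φ v).2 ∧ IsRootedAt (φ v) v := fun v hv =>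
    hD.isRootedAt_of_indeg_eq_zero (hφD v) (hφv v) (Finset.mem_filter.mp hv).2
  refine Finset.card_le_card_of_injOn φ (fun v hv => ?_) (fun v hv w hw hvw => ?_)
  · exact Finset.mem_filter.mpr ⟨hφD v, (hroot v hv).1.not_isClosedNecklace⟩
  · exact (hroot v hv).2.unique (hvw ▸ (hroot w hw).2)

lemma exists_rootedAt_mem_of_card_sources_lt [Fintype V] (hD : IsTameCover E D)
    (hlt : (sources E).card < numOpen D) :
    ∃ H ∈ D, ∃ h, IsRanked H.2 ∧ IsRootedAt H h ∧ ∃ u, (u, h) ∈ E := by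
  by_contra hno
  push Not at hno
  choose φ hφD hφv using hD.1.2.2
  have hsub : D.filter (fun H => ¬ IsClosedNecklace H) ⊆ (sources E).image φ := by
    intro H hH
    obtain ⟨hH, hopen⟩ := Finset.mem_filter.mp hH
    obtain ⟨hR, ρ, hρ⟩ := hD.isRanked_of_not_isClosedNecklace hH hopen
    have hρ0 : indeg E ρ = 0 := indeg_eq_zero_iff.mpr (hno H hH ρ hR hρ)
    exact Finset.mem_image.mpr ⟨ρ, Finset.mem_filter.mpr ⟨Finset.mem_univ ρ, hρ0⟩,
      hD.1.eq_of_mem (hφD ρ) hH (hφv ρ) hρ.1⟩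
  exact absurd ((Finset.card_le_card hsub).trans Finset.card_image_le) (not_le.mpr hlt)

theorem insert_graft {h u : V} (hD : IsTameCover E D) (hH : H ∈ D) (hR : IsRanked H.2)
    (hroot : IsRootedAt H h) (hH' : H' ∈ D) (hu : u ∈ H'.1) (huh : (u, h) ∈ E) :
    IsTameCover E (insert (graft H H' u h) (D \ {H, H'})) ∧
      numOpen (insert (graft H H' u h) (D \ {H, H'})) < numOpen D ∧
      numSinks (insert (graft H H' u h) (D \ {H, H'})) ≤ numSinks D := by
  have hHH' : H' = H ∨ Disjoint H.1 H'.1 := by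
    by_cases hH'H : H' = H
    · exact Or.inl hH'H
    · exact Or.inr (hD.1.2.1 H hH H' hH' (Ne.symm hH'H))
  have hM := graft_isNecklace (hD.1.1 H hH) (hD.1.1 H' hH') hHH' hroot hu huh
  have hS : {H, H'} ⊆ D := Finset.insert_subset hH (Finset.singleton_subset_iff.mpr hH')
  have hopen : ¬ IsClosedNecklace H := hR.not_isClosedNecklace
  set M := graft H H' u h
  have hfewer : IsSaturated M → numOpen {M} < numOpen {H, H'} := fun hsat =>
    (numOpen_singleton_of_isClosedNecklace (hsat.isClosedNecklace hM)).trans_lt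
      (one_le_numOpen_of_mem (Finset.mem_insert_self H {H'}) hopen)
  obtain ⟨hMtame, hMopen⟩ : IsTame M ∧ numOpen {M} < numOpen {H, H'} := by
    by_cases hclosed : H' = H ∨ IsSaturated H'
    · have hsat := graft_isSaturated (u := u) hroot hclosed
      exact ⟨Or.inr hsat, hfewer hsat⟩
    push Not at hclosed
    obtain ⟨hR', ρ, hρ⟩ := (hD.2 H' hH').resolve_right hclosed.2
    have hdisj := hD.1.2.1 H hH H' hH' (Ne.symm hclosed.1)
    refine ⟨Or.inl ⟨graft_isRanked (hD.1.1 H hH) (hD.1.1 H' hH') hdisj hu hroot.1 hR hR',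
      ρ, graft_isRootedAt (hD.1.1 H hH) hdisj hroot hρ⟩, ?_⟩
    rw [numOpen_pair (Ne.symm hclosed.1) hopen hR'.not_isClosedNecklace]
    exact (numOpen_singleton_le_one M).trans_lt one_lt_two
  have hsinks : sinks M ⊆ ({H, H'} : Finset _).biUnion sinks := by
    rw [Finset.biUnion_insert, Finset.singleton_biUnion]
    exact sinks_graft_subset.trans (Finset.erase_subset _ _)
  have hcount := numOpen_insert_sdiff_add_le hS (M := M)
  refine ⟨⟨hD.1.insert_sdiff hH hH' hM rfl, ?_⟩, by omega,
    numSinks_insert_sdiff_le hS hsinks⟩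
  simp only [Finset.forall_mem_insert]
  exact ⟨hMtame, fun K hK => hD.2 K (Finset.sdiff_subset hK)⟩

theorem exists_numOpen_eq [Fintype V] {D : Finset (Finset V × Finset (V × V))}
    (hD : IsTameCover E D) :
    ∃ D', IsTameCover E D' ∧ numOpen D' = (sources E).card ∧ numSinks D' ≤ numSinks D := by
  rcases (hD.card_sources_le_numOpen).eq_or_lt with heq | hlt
  · exact ⟨D, hD, heq.symm, le_rfl⟩
  obtain ⟨H, hH, h, hR, hroot, u, huh⟩ := hD.exists_rootedAt_mem_of_card_sources_lt hlt
  obtain ⟨H', hH', hu⟩ := hD.1.2.2 u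
  obtain ⟨hD₁, hdec, hsinks⟩ := hD.insert_graft hH hR hroot hH' hu huh
  obtain ⟨D', hD', hopen, hsinks'⟩ := hD₁.exists_numOpen_eq
  exact ⟨D', hD', hopen, hsinks'.trans hsinks⟩
termination_by numOpen D

end IsTameCover

theorem stmt17 [Fintype V] (E : Finset (V × V)) (C : PCCover E) :
    ∃ D : Finset (Finset V × Finset (V × V)), IsNecklaceCover E D ∧
      numOpen D = (Finset.univ.filter (fun v : V => indeg E v = 0)).card ∧
      numLeaves D ≤
        C.paths.card - (Finset.univ.filter (fun v : V => indeg E v = 0)).card := by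
  obtain ⟨D₀, hD₀, hsinks₀⟩ := C.exists_isTameCover
  obtain ⟨D, hD, hopen, hsinks⟩ := hD₀.exists_numOpen_eq
  refine ⟨D, hD.1, hopen, ?_⟩
  unfold numLeaves
  rw [hopen]
  exact Nat.sub_le_sub_right (hsinks.trans hsinks₀) _
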